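/- Let n ≥ 1, let A be an n×n real matrix whose complex eigenvalues all lie in ℂ∖(−∞,0], let r ∈ ℝ, and set b = (tanh(sinh(r))+1)/2 ∈ (0,1). Then the improper integral ∫_{r}^{∞} F_DE(x) dx exists and equals ∫_b^1 (t(A−I)+I)^{-1} dt, where F_DE(x) := cosh(x)·sech²(sinh(x))·[(1+tanh(sinh(x)))(A−I)+2I]^{-1}. -/

import Mathlib

open MeasureTheory

/-- Entrywise integral of a matrix-valued function over an interval. -/
noncomputable def entryIntegral {n : ℕ} (f : ℝ → Matrix (Fin n) (Fin n) ℝ) (a b : ℝ) :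
    Matrix (Fin n) (Fin n) ℝ :=
  Matrix.of fun i j => ∫ t in a..b, f t i j

/-- The integrand of the double exponential transformation. -/
noncomputable def FDE {n : ℕ} (A : Matrix (Fin n) (Fin n) ℝ) (x : ℝ) :
    Matrix (Fin n) (Fin n) ℝ :=
  (Real.cosh x * (1 / Real.cosh (Real.sinh x)) ^ 2) •
    ((1 + Real.tanh (Real.sinh x)) • (A - 1) + (2 : Matrix (Fin n) (Fin n) ℝ))⁻¹

/-!
The substitution `t = φ x = (tanh (sinh x) + 1) / 2` maps `[r, ∞)` bijectively onto `[φ r, 1)`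
with positive derivative `φ' x = cosh x · sech² (sinh x) / 2`. Since
`(1 + tanh (sinh x)) (A - I) + 2 I = 2 (φ x (A - I) + I)`, the integrand `FDE A x` is exactly
`φ' x · (φ x (A - I) + I)⁻¹`, so the claim is the change of variables formula, entry by entry.
The matrices `t (A - I) + I`, `0 ≤ t ≤ 1`, are invertible because for `t > 0` a singular one
would make `1 - 1/t ≤ 0` a real eigenvalue of `A`.
-/

open Real Set

theorem Matrix.mem_spectrum_map_iff {n K L : Type*} [Fintype n] [DecidableEq n] [Field K]
    [Field L] (f : K →+* L) {A : Matrix n n K} {c : K} :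
    f c ∈ spectrum L (A.map f) ↔ c ∈ spectrum K A := by
  simp only [Matrix.mem_spectrum_iff_isRoot_charpoly, Matrix.charpoly_map, Polynomial.IsRoot.def,
    Polynomial.eval_map_apply, map_eq_zero]

theorem isUnit_smul_sub_one_add_one {R : Type*} [Ring R] [Algebra ℝ R] {a : R}
    (ha : ∀ c ≤ 0, c ∉ spectrum ℝ a) {t : ℝ} (ht : t ∈ Icc 0 1) :
    IsUnit (t • (a - 1) + 1) := by
  rcases ht.1.eq_or_lt with rfl | htpos
  · simp
  have hc : 1 - t⁻¹ ≤ 0 := sub_nonpos.2 ((one_le_inv₀ htpos).2 ht.2)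
  have heq : t • (a - 1) + 1 = (-t) • (algebraMap ℝ R (1 - t⁻¹) - a) := by
    rw [Algebra.algebraMap_eq_smul_one, smul_sub (-t), smul_smul, mul_sub, mul_one, neg_mul,
      mul_inv_cancel₀ htpos.ne']
    module
  rw [heq]
  exact (spectrum.notMem_iff.1 (ha _ hc)).smul (Units.mk0 (-t) (neg_ne_zero.2 htpos.ne'))

theorem ContinuousOn.matrix_inv {X n R : Type*} [TopologicalSpace X] [Fintype n] [DecidableEq n]
    [NormedCommRing R] [HasSummableGeomSeries R] {f : X → Matrix n n R} {s : Set X}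
    (hf : ContinuousOn f s) (hdet : ∀ x ∈ s, IsUnit (f x).det) :
    ContinuousOn (fun x => (f x)⁻¹) s := fun x hx => by
  obtain ⟨u, hu⟩ := hdet x hx
  exact (continuousAt_matrix_inv _ (hu ▸ NormedRing.inverse_continuousAt u)).comp_continuousWithinAt
    (hf x hx)

theorem Real.hasDerivAt_tanh (x : ℝ) : HasDerivAt tanh (1 / cosh x ^ 2) x := by
  have h := (hasDerivAt_sinh x).div (hasDerivAt_cosh x) (cosh_pos x).ne'
  rw [show cosh x * cosh x - sinh x * sinh x = 1 by nlinarith [cosh_sq_sub_sinh_sq x]] at h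
  exact h.congr_of_eventuallyEq (.of_eq (funext fun y => tanh_eq_sinh_div_cosh y))

section ChangeOfVariables

variable {E : Type*} [NormedAddCommGroup E] [NormedSpace ℝ E] {φ φ' : ℝ → ℝ} {r L : ℝ}
  {g : ℝ → E}

theorem integrableOn_Ici_comp_smul_deriv (hφ : ∀ x ∈ Ici r, HasDerivWithinAt φ (φ' x) (Ici r) x)
    (hφ' : ∀ x ∈ Ici r, 0 ≤ φ' x) (hinj : InjOn φ (Ici r)) (himage : φ '' Ici r = Ico (φ r) L)
    (hg : IntervalIntegrable g volume (φ r) L) :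
    IntegrableOn (fun x => φ' x • g (φ x)) (Ici r) := by
  have hrL : φ r ≤ L := (himage ▸ mem_image_of_mem φ (le_refl r) : φ r ∈ Ico (φ r) L).2.le
  have hg' : IntegrableOn g (φ '' Ici r) := by
    rw [himage, ← integrableOn_Icc_iff_integrableOn_Ico, integrableOn_Icc_iff_integrableOn_Ioc]
    exact (intervalIntegrable_iff_integrableOn_Ioc_of_le hrL).1 hg
  exact ((integrableOn_image_iff_integrableOn_abs_deriv_smul measurableSet_Ici hφ hinj g).1
    hg').congr_fun (fun x hx => by simp only [abs_of_nonneg (hφ' x hx)]) measurableSet_Ici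

theorem integral_Ici_comp_smul_deriv (hφ : ∀ x ∈ Ici r, HasDerivWithinAt φ (φ' x) (Ici r) x)
    (hφ' : ∀ x ∈ Ici r, 0 ≤ φ' x) (hinj : InjOn φ (Ici r)) (himage : φ '' Ici r = Ico (φ r) L) :
    ∫ x in Ici r, φ' x • g (φ x) = ∫ t in φ r..L, g t := by
  have hrL : φ r ≤ L := (himage ▸ mem_image_of_mem φ (le_refl r) : φ r ∈ Ico (φ r) L).2.le
  rw [intervalIntegral.integral_of_le hrL, integral_Ioc_eq_integral_Ioo,
    ← integral_Ico_eq_integral_Ioo, ← himage,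
    integral_image_eq_integral_abs_deriv_smul measurableSet_Ici hφ hinj]
  exact setIntegral_congr_fun measurableSet_Ici fun x hx => by rw [abs_of_nonneg (hφ' x hx)]

end ChangeOfVariables

noncomputable def deTransform (x : ℝ) : ℝ := (tanh (sinh x) + 1) / 2

theorem hasDerivAt_deTransform (x : ℝ) :
    HasDerivAt deTransform (cosh x * (1 / cosh (sinh x)) ^ 2 / 2) x := by
  unfold deTransform
  exact ((((hasDerivAt_tanh _).comp x (hasDerivAt_sinh x)).add_const 1).div_const 2).congr_deriv
    (by ring)

theorem deriv_deTransform_pos (x : ℝ) : 0 < deriv deTransform x := by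
  rw [(hasDerivAt_deTransform x).deriv]
  have := cosh_pos (sinh x)
  positivity

theorem deTransform_strictMono : StrictMono deTransform :=
  strictMono_of_deriv_pos deriv_deTransform_pos

theorem deTransform_mem_Ioo (x : ℝ) : deTransform x ∈ Ioo 0 1 := by
  have := neg_one_lt_tanh (sinh x)
  have := tanh_lt_one (sinh x)
  constructor <;> unfold deTransform <;> linarith

theorem image_deTransform_Ici (r : ℝ) : deTransform '' Ici r = Ico (deTransform r) 1 := by
  refine Subset.antisymm ?_ fun t ⟨hrt, ht1⟩ => ?_
  · rintro _ ⟨x, hx, rfl⟩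
    exact ⟨deTransform_strictMono.monotone hx, (deTransform_mem_Ioo x).2⟩
  have ht : 2 * t - 1 ∈ Ioo (-1) 1 := by
    have := (deTransform_mem_Ioo r).1
    constructor <;> linarith
  obtain ⟨s, -, hs⟩ := tanh_surjOn ht
  obtain ⟨x, rfl⟩ := sinh_surjective s
  have hxt : deTransform x = t := by unfold deTransform; linarith
  exact ⟨x, deTransform_strictMono.le_iff_le.1 (hxt ▸ hrt), hxt⟩

theorem FDE_eq_deriv_deTransform_smul {n : ℕ} {A : Matrix (Fin n) (Fin n) ℝ} {x : ℝ}
    (hunit : IsUnit (deTransform x • (A - 1) + 1).det) :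
    FDE A x = deriv deTransform x • (deTransform x • (A - 1) + 1)⁻¹ := by
  have hmat : (1 + tanh (sinh x)) • (A - 1) + 2 =
      (Units.mk0 (2 : ℝ) two_ne_zero) • (deTransform x • (A - 1) + 1) := by
    rw [Units.smul_mk0, smul_add, smul_smul, deTransform]
    congr 1
    · ring_nf
    · rw [two_smul, one_add_one_eq_two]
  rw [FDE, hmat, Matrix.inv_smul' _ _ hunit, Units.smul_def, smul_smul, Units.val_inv_eq_inv_val,
    Units.val_mk0, (hasDerivAt_deTransform x).deriv, ← div_eq_mul_inv]

theorem stmt_13_general {n : ℕ} (A : Matrix (Fin n) (Fin n) ℝ)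
    (hspec : ∀ μ ∈ spectrum ℂ (A.map fun x => (x : ℂ)), ¬(μ.im = 0 ∧ μ.re ≤ 0))
    (r : ℝ) (b : ℝ) (hbdef : b = (Real.tanh (Real.sinh r) + 1) / 2) :
    (∀ i j, IntegrableOn (fun x => FDE A x i j) (Set.Ici r)) ∧
      (Matrix.of fun i j => ∫ x in Set.Ici r, FDE A x i j) =
        entryIntegral (fun t => (t • (A - 1) + 1)⁻¹) b 1 := by
  have hunit (t : ℝ) (ht : t ∈ Icc 0 1) : IsUnit (t • (A - 1) + 1).det :=
    (Matrix.isUnit_iff_isUnit_det _).1 <| isUnit_smul_sub_one_add_one (fun c hc hmem =>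
      hspec _ ((Matrix.mem_spectrum_map_iff Complex.ofRealHom).2 hmem) ⟨Complex.ofReal_im c, hc⟩) ht
  have hentry (i j) (x : ℝ) :
      FDE A x i j = deriv deTransform x • (deTransform x • (A - 1) + 1)⁻¹ i j := by
    rw [FDE_eq_deriv_deTransform_smul (hunit _ (Ioo_subset_Icc_self (deTransform_mem_Ioo x))),
      Matrix.smul_apply]
  have hr := deTransform_mem_Ioo r
  have hcont : ContinuousOn (fun t : ℝ => (t • (A - 1) + 1)⁻¹) (Icc (deTransform r) 1) :=
    ContinuousOn.matrix_inv (by fun_prop) fun t ht => hunit t ⟨hr.1.le.trans ht.1, ht.2⟩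
  have hg (i j) : IntervalIntegrable (fun t => (t • (A - 1) + 1)⁻¹ i j) volume (deTransform r) 1 :=
    ((Continuous.matrix_elem continuous_id i j).comp_continuousOn hcont).intervalIntegrable_of_Icc
      hr.2.le
  have hφ (x : ℝ) (_ : x ∈ Ici r) :=
    (hasDerivAt_deTransform x).differentiableAt.hasDerivAt.hasDerivWithinAt (s := Ici r)
  have hφ' (x : ℝ) (_ : x ∈ Ici r) := (deriv_deTransform_pos x).le
  have hinj := deTransform_strictMono.injective.injOn (s := Ici r)
  rw [show b = deTransform r from hbdef]
  simp only [hentry]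
  refine ⟨fun i j => integrableOn_Ici_comp_smul_deriv hφ hφ' hinj (image_deTransform_Ici r)
    (hg i j), ?_⟩
  ext i j
  exact integral_Ici_comp_smul_deriv (g := fun t => (t • (A - 1) + 1)⁻¹ i j) hφ hφ' hinj
    (image_deTransform_Ici r)

/-- Right tail of the DE integral equals the right-endpoint truncation of the standard
integral representation. -/
theorem stmt_13 {n : ℕ} (hn : 1 ≤ n) (A : Matrix (Fin n) (Fin n) ℝ)
    (hspec : ∀ μ ∈ spectrum ℂ (A.map fun x => (x : ℂ)), ¬(μ.im = 0 ∧ μ.re ≤ 0))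
    (r : ℝ) (b : ℝ) (hbdef : b = (Real.tanh (Real.sinh r) + 1) / 2) :
    (∀ i j, IntegrableOn (fun x => FDE A x i j) (Set.Ici r)) ∧
      (Matrix.of fun i j => ∫ x in Set.Ici r, FDE A x i j) =
        entryIntegral (fun t => (t • (A - 1) + 1)⁻¹) b 1 :=
  stmt_13_general A hspec r b hbdef
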